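/- For each fixed integer ℓ ≥ 0, with η_ℓ = √(1 - ℓ/N) and s(x) = 2∫_x^1 √(1-y²) dy, one has for x in any compact subset of (-1,1): (N-ℓ)·s(η_ℓ^{-1} x) = N·s(x) - ℓ·arccos(x) + O(N^{-1}) as N → ∞, uniformly in x. -/

import Mathlib

/-!
On `[-1, 1]` we have `sFun x = arccos x - x √(1 - x²)`. Put `t = ℓ / N` and
`G t = (1 - t) sFun (x / √(1 - t))`, so that the left-hand side is `N (G t - G 0 + t arccos x)`.
Differentiating with the closed form gives `G' t = -arccos (x / √(1 - t))`, which is Lipschitz in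
`t` uniformly for `x` in a compact subset of `(-1, 1)`. A first-order Taylor estimate then bounds
`G t - G 0 - t G' 0` by `O(t²) = O(N⁻²)`.
-/

open Real intervalIntegral Set

noncomputable def sFun (x : ℝ) : ℝ := 2 * ∫ y in x..1, Real.sqrt (1 - y ^ 2)

open Filter

lemma abs_sub_sub_mul_deriv_le {f f' : ℝ → ℝ} {a b L : ℝ} (hab : a ≤ b)
    (hf : ∀ s ∈ Icc a b, HasDerivAt f (f' s) s)
    (hf' : ∀ s ∈ Icc a b, |f' s - f' a| ≤ L * (s - a)) :
    |f b - f a - (b - a) * f' a| ≤ L * (b - a) ^ 2 := by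
  have hg : ∀ s ∈ Icc a b, HasDerivWithinAt (fun s => f s - s * f' a) (f' s - f' a) (Icc a b) s :=
    fun s hs => (((hf s hs).sub ((hasDerivAt_id s).mul_const (f' a))).congr_deriv
      (by simp)).hasDerivWithinAt
  have hbound : ∀ s ∈ Ico a b, ‖f' s - f' a‖ ≤ L * (b - a) := by
    intro s hs
    have hL : 0 ≤ L := by
      have := (abs_nonneg _).trans (hf' b (right_mem_Icc.2 hab))
      exact nonneg_of_mul_nonneg_left this (by linarith [hs.1, hs.2])
    exact (hf' s (Ico_subset_Icc_self hs)).trans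
      (mul_le_mul_of_nonneg_left (by linarith [hs.2]) hL)
  have := norm_image_sub_le_of_norm_deriv_le_segment' hg hbound b (right_mem_Icc.2 hab)
  rw [Real.norm_eq_abs] at this
  calc |f b - f a - (b - a) * f' a| = |f b - b * f' a - (f a - a * f' a)| := by ring_nf
    _ ≤ L * (b - a) * (b - a) := this
    _ = L * (b - a) ^ 2 := by ring

lemma hasDerivAt_sFun (x : ℝ) : HasDerivAt sFun (-(2 * √(1 - x ^ 2))) x := by
  have hcont : Continuous fun y : ℝ => √(1 - y ^ 2) := by fun_prop
  have h := ((hcont.integral_hasStrictDerivAt 1 x).hasDerivAt.neg).const_mul 2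
  refine (h.congr_of_eventuallyEq (Eventually.of_forall fun y => ?_)).congr_deriv (by ring)
  simp only [sFun, integral_symm 1 y, Pi.neg_apply]

lemma hasDerivAt_arccos_sub_mul_sqrt {y : ℝ} (hy : y ∈ Ioo (-1) 1) :
    HasDerivAt (fun y => arccos y - y * √(1 - y ^ 2)) (-(2 * √(1 - y ^ 2))) y := by
  have hpos : 0 < 1 - y ^ 2 := by nlinarith [hy.1, hy.2]
  have hsqrt : HasDerivAt (fun y : ℝ => √(1 - y ^ 2)) (-(2 * y) / (2 * √(1 - y ^ 2))) y :=
    (((hasDerivAt_pow 2 y).const_sub 1).congr_deriv (by ring)).sqrt hpos.ne'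
  refine ((hasDerivAt_arccos hy.1.ne' hy.2.ne).sub ((hasDerivAt_id y).mul hsqrt)).congr_deriv ?_
  have hS : √(1 - y ^ 2) ^ 2 = 1 - y ^ 2 := sq_sqrt hpos.le
  field_simp [(sqrt_pos.2 hpos).ne']
  simp only [id]
  nlinarith [hS]

lemma sFun_eq_arccos_sub {x : ℝ} (hx : x ∈ Icc (-1) 1) :
    sFun x = arccos x - x * √(1 - x ^ 2) := by
  have hFTC := integral_eq_sub_of_hasDeriv_right_of_le hx.2
    (f := fun y => arccos y - y * √(1 - y ^ 2)) (by fun_prop)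
    (fun y hy => (hasDerivAt_arccos_sub_mul_sqrt ⟨by linarith [hx.1, hy.1], hy.2⟩).hasDerivWithinAt)
    (by apply Continuous.intervalIntegrable; fun_prop)
  rw [integral_neg, integral_const_mul] at hFTC
  norm_num [arccos_one] at hFTC
  rw [sFun]
  linarith

lemma abs_arccos_sub_le {δ a b : ℝ} (hδ : 0 < δ) (ha : a ^ 2 ≤ 1 - δ) (hb : b ^ 2 ≤ 1 - δ) :
    |arccos b - arccos a| ≤ |b - a| / √δ := by
  have hmem : ∀ {y : ℝ}, y ^ 2 ≤ 1 - δ → y ∈ Icc (-√(1 - δ)) √(1 - δ) :=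
    fun hy => abs_le.1 (abs_le_sqrt hy)
  have hsq : ∀ y ∈ Icc (-√(1 - δ)) √(1 - δ), y ^ 2 ≤ 1 - δ := fun y hy =>
    (sq_le_sq' hy.1 hy.2).trans (sq_sqrt (by nlinarith [sq_nonneg y, hy.1, hy.2])).le
  have key := (convex_Icc (-√(1 - δ)) √(1 - δ)).norm_image_sub_le_of_norm_hasDerivWithin_le
    (f := arccos) (C := (√δ)⁻¹)
    (fun y hy => (hasDerivAt_arccos (by rintro rfl; linarith [hsq _ hy])
      (by rintro rfl; linarith [hsq _ hy])).hasDerivWithinAt)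
    (fun y hy => by
      rw [norm_neg, norm_div, norm_one, Real.norm_of_nonneg (sqrt_nonneg _), one_div]
      exact inv_anti₀ (sqrt_pos.2 hδ) (sqrt_le_sqrt (by linarith [hsq y hy])))
    (hmem ha) (hmem hb)
  simpa [Real.norm_eq_abs, div_eq_inv_mul] using key

lemma abs_inv_sqrt_one_sub_mul_sub_le {s x : ℝ} (hs : 0 ≤ s) (hx : x ^ 2 < 1 - s) :
    |(√(1 - s))⁻¹ * x - x| ≤ s := by
  set u := √(1 - s)
  have hu0 : 0 < u := sqrt_pos.2 (by nlinarith [sq_nonneg x])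
  have hu2 : u ^ 2 = 1 - s := sq_sqrt (by nlinarith [sq_nonneg x])
  have hxu : |x| ≤ u := abs_le_sqrt hx.le
  have hu1 : u ≤ 1 := sqrt_le_one.2 (by linarith)
  have : u⁻¹ * x - x = x / u * (1 - u) := by field_simp
  rw [this, abs_mul, abs_div, abs_of_pos hu0, abs_of_nonneg (sub_nonneg.2 hu1)]
  calc |x| / u * (1 - u) ≤ 1 * (1 - u) :=
        mul_le_mul_of_nonneg_right ((div_le_one hu0).2 hxu) (by linarith)
    _ ≤ s := by nlinarith

lemma sq_inv_sqrt_one_sub_mul_le {δ s x : ℝ} (hδ : 0 < δ) (hs : 0 ≤ s)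
    (hx : x ^ 2 + s ≤ 1 - δ) : ((√(1 - s))⁻¹ * x) ^ 2 ≤ 1 - δ := by
  have h1s : 0 < 1 - s := by nlinarith [sq_nonneg x]
  rw [mul_pow, inv_pow, sq_sqrt h1s.le, inv_mul_le_iff₀ h1s]
  nlinarith

noncomputable def sFunRescaled (x t : ℝ) : ℝ := (1 - t) * sFun ((√(1 - t))⁻¹ * x)

lemma hasDerivAt_sFunRescaled {x t : ℝ} (h : x ^ 2 < 1 - t) :
    HasDerivAt (sFunRescaled x) (-arccos ((√(1 - t))⁻¹ * x)) t := by
  have ht : 0 < 1 - t := (sq_nonneg x).trans_lt h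
  set u := √(1 - t)
  have hu0 : 0 < u := sqrt_pos.2 ht
  have hu2 : u ^ 2 = 1 - t := sq_sqrt ht.le
  have hc : (u⁻¹ * x) ^ 2 < 1 := by
    rw [mul_pow, inv_pow, hu2, inv_mul_lt_one₀ ht]; exact h
  have hsqrt : HasDerivAt (fun t => √(1 - t)) (-1 / (2 * u)) t :=
    ((hasDerivAt_id t).const_sub 1).sqrt ht.ne'
  have harg : HasDerivAt (fun t => (√(1 - t))⁻¹ * x) (-(-1 / (2 * u)) / u ^ 2 * x) t :=
    (hsqrt.inv hu0.ne').mul_const x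
  have hS := (hasDerivAt_sFun (u⁻¹ * x)).comp t harg
  refine (((hasDerivAt_id t).const_sub 1).mul hS).congr_deriv ?_
  simp only [Function.comp_apply, id]
  rw [sFun_eq_arccos_sub (abs_le.1 ((sq_le_one_iff_abs_le_one _).1 hc.le)), ← hu2]
  field_simp
  ring

lemma abs_sFunRescaled_sub_le {δ x t : ℝ} (hδ : 0 < δ) (ht : 0 ≤ t)
    (hxt : x ^ 2 + t ≤ 1 - δ) :
    |sFunRescaled x t - sFun x + t * arccos x| ≤ t ^ 2 / √δ := by
  have hderiv : ∀ s ∈ Icc 0 t,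
      HasDerivAt (sFunRescaled x) (-arccos ((√(1 - s))⁻¹ * x)) s :=
    fun s hs => hasDerivAt_sFunRescaled (by linarith [hs.2])
  have hlip : ∀ s ∈ Icc 0 t, |-arccos ((√(1 - s))⁻¹ * x) - -arccos ((√(1 - 0))⁻¹ * x)|
      ≤ (√δ)⁻¹ * (s - 0) := by
    intro s hs
    have hxs : x ^ 2 + s ≤ 1 - δ := by linarith [hs.2]
    rw [sub_zero, sqrt_one, inv_one, one_mul, neg_sub_neg, abs_sub_comm]
    calc |arccos ((√(1 - s))⁻¹ * x) - arccos x|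
        ≤ |(√(1 - s))⁻¹ * x - x| / √δ :=
          abs_arccos_sub_le hδ (by linarith) (sq_inv_sqrt_one_sub_mul_le hδ hs.1 hxs)
      _ ≤ s / √δ := by
          gcongr
          exact abs_inv_sqrt_one_sub_mul_sub_le hs.1 (by linarith)
      _ = (√δ)⁻¹ * (s - 0) := by ring
  have h := abs_sub_sub_mul_deriv_le ht hderiv hlip
  simp only [sFunRescaled, sub_zero, sqrt_one, inv_one, one_mul] at h ⊢
  convert h using 2 <;> ring

theorem stmt19 (ℓ : ℕ) (K : Set ℝ) (hK : IsCompact K) (hK' : K ⊆ Set.Ioo (-1 : ℝ) 1) :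
    ∃ C : ℝ, ∃ N₀ : ℕ, ℓ < N₀ ∧ ∀ N : ℕ, N₀ ≤ N → ∀ x ∈ K,
      |((N : ℝ) - ℓ) * sFun ((Real.sqrt (1 - (ℓ : ℝ) / N))⁻¹ * x) -
          ((N : ℝ) * sFun x - ℓ * Real.arccos x)| ≤ C / N := by
  obtain ⟨ε, hε, hKε⟩ := hK.exists_forall_le' (f := fun x => 1 - x ^ 2) (by fun_prop)
    (a := 0) fun x hx => by nlinarith [(hK' hx).1, (hK' hx).2]
  have hδ : 0 < ε / 2 := half_pos hε
  obtain ⟨N₀, hN₀⟩ := ((eventually_gt_atTop ℓ).and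
    ((tendsto_const_div_atTop_nhds_zero_nat (ℓ : ℝ)).eventually
      (eventually_le_nhds hδ))).exists_forall_of_atTop
  refine ⟨ℓ ^ 2 / √(ε / 2), N₀, (hN₀ N₀ le_rfl).1, fun N hN x hx => ?_⟩
  obtain ⟨hℓN, hℓNδ⟩ := hN₀ N hN
  have hN : (0 : ℝ) < N := Nat.cast_pos.2 (by omega)
  have hexpand : ((N : ℝ) - ℓ) * sFun ((√(1 - (ℓ : ℝ) / N))⁻¹ * x) -
      ((N : ℝ) * sFun x - ℓ * arccos x) =
      N * (sFunRescaled x (ℓ / N) - sFun x + ℓ / N * arccos x) := by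
    unfold sFunRescaled
    field_simp
    ring
  have hbound := abs_sFunRescaled_sub_le hδ (by positivity)
    (by linarith [hKε x hx] : x ^ 2 + ℓ / N ≤ 1 - ε / 2)
  rw [hexpand, abs_mul, abs_of_pos hN]
  calc N * |sFunRescaled x (ℓ / N) - sFun x + ℓ / N * arccos x|
      ≤ N * ((ℓ / N) ^ 2 / √(ε / 2)) := by gcongr
    _ = ℓ ^ 2 / √(ε / 2) / N := by field_simp
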